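/- arXiv:0709.3082 — 2 statements merged into one kernel-verified Lean document; each statement's English description precedes it below -/
import Mathlib

section
/- Under the hypotheses of the previous statement, if in addition for every y ∈ ℝ^d and b > 0, sup_{|h| ≤ b} |A(x,h) − A(y,h)| → 0 as x → y, then Lf is continuous on ℝ^d. -/
/-!
Dominated convergence. By Taylor's formula the integrand is bounded, uniformly in `x`, by a
constant times `min (‖h‖²) 1 * ‖h‖ ^ (-(d + α))`; in polar coordinates this is `r ^ (1 - α)` near
`0` and `r ^ (-1 - α)` at infinity, hence integrable for `0 < α < 2`. For fixed `h` the integrand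
is continuous in `x` because `f`, `Df` and `A (·, h)` are.
-/

open MeasureTheory Set Module

section Taylor

variable {E : Type*} [NormedAddCommGroup E] [NormedSpace ℝ E]

theorem abs_sub_sub_fderiv_le_of_norm_fderiv_fderiv_le {f : E → ℝ} (hf : ContDiff ℝ 2 f)
    {K : ℝ} (hf2 : ∀ x, ‖fderiv ℝ (fderiv ℝ f) x‖ ≤ K) (x h : E) :
    |f (x + h) - f x - fderiv ℝ f x h| ≤ K * ‖h‖ ^ 2 := by
  have hK : 0 ≤ K := (norm_nonneg (fderiv ℝ (fderiv ℝ f) x)).trans (hf2 x)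
  have hDf : Differentiable ℝ (fderiv ℝ f) :=
    (hf.fderiv_right (m := 1) (by norm_num)).differentiable one_ne_zero
  have hDf_lip : ∀ z, ‖fderiv ℝ f z - fderiv ℝ f x‖ ≤ K * ‖z - x‖ := fun z =>
    convex_univ.norm_image_sub_le_of_norm_fderiv_le (fun y _ => hDf y) (fun y _ => hf2 y)
      (mem_univ x) (mem_univ z)
  -- mean value inequality for `f - fderiv ℝ f x` on the ball of radius `‖h‖` around `x`
  have key := (convex_closedBall x ‖h‖).norm_image_sub_le_of_norm_fderiv_le'
    (fun z _ => (hf.differentiable two_ne_zero).differentiableAt)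
    (fun z hz => (hDf_lip z).trans <| mul_le_mul_of_nonneg_left
      (by rw [← dist_eq_norm]; exact Metric.mem_closedBall.1 hz) hK)
    (Metric.mem_closedBall_self (norm_nonneg h))
    (by rw [Metric.mem_closedBall, dist_eq_norm, add_sub_cancel_left])
  rw [add_sub_cancel_left] at key
  rw [← Real.norm_eq_abs, sq, ← mul_assoc]
  exact key

noncomputable def levyIncrement (f : E → ℝ) (x h : E) : ℝ :=
  f (x + h) - f x - if ‖h‖ ≤ 1 then fderiv ℝ f x h else 0

theorem abs_levyIncrement_le {f : E → ℝ} (hf : ContDiff ℝ 2 f) {K : ℝ}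
    (hf0 : ∀ x, |f x| ≤ K) (hf2 : ∀ x, ‖fderiv ℝ (fderiv ℝ f) x‖ ≤ K) (x h : E) :
    |levyIncrement f x h| ≤ 2 * K * min (‖h‖ ^ 2) 1 := by
  have hK : 0 ≤ K := (abs_nonneg _).trans (hf0 x)
  rw [levyIncrement]
  split_ifs with hh
  · rw [min_eq_left (pow_le_one₀ (norm_nonneg h) hh)]
    nlinarith [abs_sub_sub_fderiv_le_of_norm_fderiv_fderiv_le hf hf2 x h, sq_nonneg ‖h‖]
  · have hh1 : 1 ≤ ‖h‖ ^ 2 := one_le_pow₀ (not_le.1 hh).le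
    rw [min_eq_right hh1, sub_zero, mul_one]
    linarith [abs_sub (f (x + h)) (f x), hf0 (x + h), hf0 x]

end Taylor

section Levy

variable {E : Type*} [NormedAddCommGroup E] [NormedSpace ℝ E] [FiniteDimensional ℝ E]
  [MeasurableSpace E] [BorelSpace E] (μ : Measure E) [μ.IsAddHaarMeasure]

theorem integrable_min_sq_one_mul_norm_rpow_neg (hn : 1 ≤ finrank ℝ E) {p : ℝ}
    (hp : (finrank ℝ E : ℝ) < p) (hp2 : p < finrank ℝ E + 2) :
    Integrable (fun h : E => min (‖h‖ ^ 2) 1 * ‖h‖ ^ (-p)) μ := by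
  have : Nontrivial E := Module.nontrivial_of_finrank_pos (R := ℝ) hn
  set n := finrank ℝ E
  have pow_n_sub_one : ∀ r : ℝ, 0 < r → r ^ (n - 1) = r ^ ((n : ℝ) - 1) := fun r _ => by
    rw [← Real.rpow_natCast, Nat.cast_sub hn, Nat.cast_one]
  rw [integrable_fun_norm_addHaar μ (f := fun r => min (r ^ 2) 1 * r ^ (-p)),
    ← Ioc_union_Ioi_eq_Ioi zero_le_one]
  refine IntegrableOn.union ?_ ?_
  · refine ((intervalIntegral.intervalIntegrable_rpow' (a := 0) (b := 1)
      (r := (n : ℝ) + 1 - p) (by linarith)).1).congr_fun (fun r ⟨hr0, hr1⟩ => ?_)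
      measurableSet_Ioc
    rw [smul_eq_mul, min_eq_left (pow_le_one₀ hr0.le hr1), pow_n_sub_one r hr0,
      ← Real.rpow_natCast r 2, ← Real.rpow_add hr0, ← Real.rpow_add hr0]
    push_cast
    ring_nf
  · refine (integrableOn_Ioi_rpow_of_lt (a := (n : ℝ) - 1 - p) (by linarith) one_pos).congr_fun
      (fun r (hr : 1 < r) => ?_) measurableSet_Ioi
    have hr0 : 0 < r := one_pos.trans hr
    rw [smul_eq_mul, min_eq_right (one_le_pow₀ hr.le), one_mul, pow_n_sub_one r hr0,
      ← Real.rpow_add hr0]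
    ring_nf

noncomputable def levyOperator (p : ℝ) (A : E → E → ℝ) (f : E → ℝ) (x : E) : ℝ :=
  ∫ h, levyIncrement f x h * (A x h / ‖h‖ ^ p) ∂μ

theorem continuous_levyOperator (hn : 1 ≤ finrank ℝ E) {p : ℝ}
    (hp : (finrank ℝ E : ℝ) < p) (hp2 : p < finrank ℝ E + 2)
    {A : E → E → ℝ} (hA_meas : Measurable (Function.uncurry A)) {C : ℝ}
    (hA_le : ∀ x h, |A x h| ≤ C) (hA_cont : ∀ h, Continuous fun x => A x h)
    {f : E → ℝ} (hf : ContDiff ℝ 2 f) {K : ℝ} (hf0 : ∀ x, |f x| ≤ K)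
    (hf2 : ∀ x, ‖fderiv ℝ (fderiv ℝ f) x‖ ≤ K) :
    Continuous (levyOperator μ p A f) := by
  have hC : 0 ≤ C := (abs_nonneg _).trans (hA_le 0 0)
  have increment_measurable (x : E) : Measurable (levyIncrement f x) :=
    ((hf.continuous.comp (continuous_const_add x)).measurable.sub measurable_const).sub
      (Measurable.ite (measurableSet_le measurable_norm measurable_const)
        (fderiv ℝ f x).continuous.measurable measurable_const)
  have increment_continuous (h : E) : Continuous fun x => levyIncrement f x h := by
    refine ((hf.continuous.comp (continuous_add_const h)).sub hf.continuous).sub ?_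
    split_ifs
    · exact (hf.continuous_fderiv two_ne_zero).clm_apply continuous_const
    · exact continuous_const
  have integrand_le (x h : E) : ‖levyIncrement f x h * (A x h / ‖h‖ ^ p)‖ ≤
      2 * K * C * (min (‖h‖ ^ 2) 1 * ‖h‖ ^ (-p)) := by
    have hincr := abs_levyIncrement_le hf hf0 hf2 x h
    rw [Real.norm_eq_abs, abs_mul, abs_div, abs_of_nonneg (Real.rpow_nonneg (norm_nonneg h) p),
      div_eq_mul_inv, ← Real.rpow_neg (norm_nonneg h)]
    calc _ ≤ 2 * K * min (‖h‖ ^ 2) 1 * (C * ‖h‖ ^ (-p)) :=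
          mul_le_mul hincr (mul_le_mul_of_nonneg_right (hA_le x h) (by positivity))
            (by positivity) ((abs_nonneg _).trans hincr)
      _ = _ := by ring
  exact continuous_of_dominated
    (fun x => ((increment_measurable x).mul ((hA_meas.comp measurable_prodMk_left).div
      (measurable_norm.pow_const p))).aestronglyMeasurable)
    (fun x => ae_of_all _ (integrand_le x))
    ((integrable_min_sq_one_mul_norm_rpow_neg μ hn hp hp2).const_mul _)
    (ae_of_all _ fun h => (increment_continuous h).mul ((hA_cont h).div_const _))

end Levy

theorem stmt13_general (d : ℕ) (hd : 1 ≤ d) (α : ℝ) (hα : α ∈ Set.Ico (1 : ℝ) 2)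
    (c₁ c₂ : ℝ)
    (A : EuclideanSpace ℝ (Fin d) → EuclideanSpace ℝ (Fin d) → ℝ)
    (hAmeas : Measurable (Function.uncurry A))
    (hAbdd : ∀ x h, A x h ∈ Set.Icc c₁ c₂)
    (hAcont : ∀ y : EuclideanSpace ℝ (Fin d), ∀ b : ℝ, 0 < b → ∀ ε : ℝ, 0 < ε →
      ∃ δ : ℝ, 0 < δ ∧ ∀ x, ‖x - y‖ < δ → ∀ h, ‖h‖ ≤ b → |A x h - A y h| < ε)
    (f : EuclideanSpace ℝ (Fin d) → ℝ) (hf : ContDiff ℝ 2 f)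
    (K : ℝ) (hf0 : ∀ x, |f x| ≤ K)
    (hf2 : ∀ x, ‖fderiv ℝ (fderiv ℝ f) x‖ ≤ K) :
    Continuous (fun x : EuclideanSpace ℝ (Fin d) =>
      ∫ h : EuclideanSpace ℝ (Fin d),
        (f (x + h) - f x - (if ‖h‖ ≤ 1 then fderiv ℝ f x h else 0)) *
          (A x h / ‖h‖ ^ ((d : ℝ) + α))) := by
  have hA_cont (h : EuclideanSpace ℝ (Fin d)) : Continuous fun x => A x h := by
    refine Metric.continuous_iff.2 fun y ε hε => ?_
    obtain ⟨δ, hδ, hA⟩ := hAcont y (‖h‖ + 1) (by positivity) ε hε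
    exact ⟨δ, hδ, fun x hx => hA x (by rwa [← dist_eq_norm]) h (by linarith)⟩
  have hA_le (x h : EuclideanSpace ℝ (Fin d)) : |A x h| ≤ max |c₁| |c₂| :=
    abs_le_max_abs_abs (hAbdd x h).1 (hAbdd x h).2
  exact continuous_levyOperator volume (by simpa using hd)
    (by simp only [finrank_euclideanSpace_fin]; linarith [hα.1])
    (by simp only [finrank_euclideanSpace_fin]; linarith [hα.2]) hAmeas hA_le hA_cont hf hf0 hf2

/-- Proposition 3.3: if in addition `A(x,h)` is continuous in `x` uniformly over
`|h| ≤ b` for each `b > 0`, then `Lf` is continuous on `ℝ^d`. -/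
theorem stmt13 (d : ℕ) (hd : 1 ≤ d) (α : ℝ) (hα : α ∈ Set.Ico (1 : ℝ) 2)
    (c₁ c₂ : ℝ) (hc₁ : 0 < c₁)
    (A : EuclideanSpace ℝ (Fin d) → EuclideanSpace ℝ (Fin d) → ℝ)
    (hAmeas : Measurable (Function.uncurry A))
    (hAbdd : ∀ x h, A x h ∈ Set.Icc c₁ c₂)
    (hAcont : ∀ y : EuclideanSpace ℝ (Fin d), ∀ b : ℝ, 0 < b → ∀ ε : ℝ, 0 < ε →
      ∃ δ : ℝ, 0 < δ ∧ ∀ x, ‖x - y‖ < δ → ∀ h, ‖h‖ ≤ b → |A x h - A y h| < ε)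
    (f : EuclideanSpace ℝ (Fin d) → ℝ) (hf : ContDiff ℝ 2 f)
    (K : ℝ) (hf0 : ∀ x, |f x| ≤ K) (hf1 : ∀ x, ‖fderiv ℝ f x‖ ≤ K)
    (hf2 : ∀ x, ‖fderiv ℝ (fderiv ℝ f) x‖ ≤ K) :
    Continuous (fun x : EuclideanSpace ℝ (Fin d) =>
      ∫ h : EuclideanSpace ℝ (Fin d),
        (f (x + h) - f x - (if ‖h‖ ≤ 1 then fderiv ℝ f x h else 0)) *
          (A x h / ‖h‖ ^ ((d : ℝ) + α))) :=
  stmt13_general d hd α hα c₁ c₂ A hAmeas hAbdd hAcont f hf K hf0 hf2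
end

section
/- Let μ and ν be two nonatomic σ-finite Borel measures on (0,∞)² that are finite and positive on sets of the form [a,b) × [c,d) with 0 < a < b, 0 < c < d, assign infinite mass to every neighborhood of the coordinate axes appropriately, and suppose μ(B)/ν-comparability: there exist constants 0 < c₁ ≤ c₂ with c₁ ν(B) ≤ μ(B) ≤ c₂ ν(B) for all Borel B (as when dμ = A(h)/|h|^{d+α} dh and dν = dh/|h|^{d+α} with c₁ ≤ A ≤ c₂, d = 2). Then there exists an injective measurable map F : (0,∞)² → (0,∞)² such that ν(F^{−1}(B)) = μ(B) for every Borel set B, i.e. the pushforward of ν under F equals μ. -/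
/-!
Both measures are isomorphic, modulo null sets, to Lebesgue measure on `[0, ∞)`. Embed the
standard Borel space measurably into `ℝ` so that the image measure `m` is finite on every
half-line `(-∞, y]`; since `m` is atomless and has infinite total mass, its distribution function
`x ↦ m (-∞, x]` pushes `m` forward to Lebesgue measure on `[0, ∞)` and is injective off an
`m`-null set. Composing the isomorphism for `ν` with a measurable inverse of the one for `μ`
gives a map pushing `ν` to `μ` which is injective off a `ν`-null set; that null set is finally
sent injectively into a `μ`-null segment `{x₀} × (0, ∞)` of the quadrant.
-/

open MeasureTheory Set Filter Topology Function
open scoped ENNReal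

lemma MeasureTheory.Measure.ext_of_Iic_of_ne_top {α : Type*} [TopologicalSpace α]
    [MeasurableSpace α] [SecondCountableTopology α] [LinearOrder α] [OrderTopology α]
    [BorelSpace α] [NoMinOrder α] {μ ν : Measure α} (hfin : ∀ a, μ (Iic a) ≠ ∞)
    (h : ∀ a, μ (Iic a) = ν (Iic a)) : μ = ν := by
  refine Measure.ext_of_Ioc' μ ν (fun a b _ => ne_top_of_le_ne_top (hfin b)
    (measure_mono Ioc_subset_Iic_self)) fun a b hab => ?_
  rw [← Iic_sdiff_Iic, measure_sdiff (Iic_subset_Iic.2 hab.le) nullMeasurableSet_Iic (hfin a),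
    measure_sdiff (Iic_subset_Iic.2 hab.le) nullMeasurableSet_Iic (h a ▸ hfin a), h a, h b]

section DistribFun

variable {m : Measure ℝ}

lemma measure_Iio_le_of_forall_lt {u : ℝ} {Y : ℝ≥0∞} (h : ∀ x < u, m (Iic x) ≤ Y) :
    m (Iio u) ≤ Y := by
  obtain ⟨f, hf_mono, hf_lt, hf_lim⟩ := exists_seq_strictMono_tendsto u
  rw [← iUnion_Iic_eq_Iio_of_lt_of_tendsto hf_lt hf_lim,
    Monotone.measure_iUnion fun _ _ hij => Iic_subset_Iic.2 (hf_mono.monotone hij)]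
  exact iSup_le fun n => h _ (hf_lt n)

lemma le_measure_Iic_of_forall_gt (hfin : ∀ x, m (Iic x) ≠ ∞) {u : ℝ} {Y : ℝ≥0∞}
    (h : ∀ x, u < x → Y ≤ m (Iic x)) : Y ≤ m (Iic u) := by
  obtain ⟨f, hf_anti, hf_gt, hf_lim⟩ := exists_seq_strictAnti_tendsto u
  have hinter : ⋂ n, Iic (f n) = Iic u := by
    ext x
    simp only [mem_iInter, mem_Iic]
    exact ⟨fun hx => ge_of_tendsto' hf_lim hx, fun hx n => hx.trans (hf_gt n).le⟩
  rw [← hinter, Antitone.measure_iInter (fun _ _ hij => Iic_subset_Iic.2 (hf_anti.antitone hij))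
    (fun _ => nullMeasurableSet_Iic) ⟨0, hfin _⟩]
  exact le_iInf fun n => h _ (hf_gt n)

lemma measure_setOf_measure_Iic_le [NullSingletonClass m] (hfin : ∀ x, m (Iic x) ≠ ∞)
    (htop : m univ = ∞) {Y : ℝ≥0∞} (hY : Y ≠ ∞) : m {x | m (Iic x) ≤ Y} = Y := by
  set S := {x | m (Iic x) ≤ Y}
  have hS : IsLowerSet S := fun a b hba ha => (measure_mono (Iic_subset_Iic.2 hba)).trans ha
  rcases S.eq_empty_or_nonempty with hSe | hSne
  · have hY0 : Y ≤ m (⋂ x, Iic x) := by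
      rw [monotone_Iic.measure_iInter (fun _ => nullMeasurableSet_Iic) ⟨0, hfin 0⟩]
      exact le_iInf fun x => le_of_lt (not_le.1 fun hx => hSe.subset hx)
    rw [iInter_Iic_eq_empty_iff.2 (by simp), measure_empty, nonpos_iff_eq_zero] at hY0
    rw [hSe, measure_empty, hY0]
  have hbdd : BddAbove S := by
    have := tendsto_measure_Iic_atTop m
    rw [htop] at this
    obtain ⟨M, hM⟩ := (this.eventually (lt_mem_nhds hY.lt_top)).exists
    exact ⟨M, fun x hx => not_lt.1 fun hMx =>
      (hM.trans_le ((measure_mono (Iic_subset_Iic.2 hMx.le)).trans hx)).false⟩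
  -- `Iio u ⊆ S ⊆ Iic u`, and these two half-lines have the same measure as `m` is atomless.
  set u := sSup S
  have hIio : Iio u ⊆ S := fun x hx => by
    obtain ⟨s, hsS, hxs⟩ := exists_lt_of_lt_csSup hSne hx
    exact hS hxs.le hsS
  have hIic : S ⊆ Iic u := fun x hx => le_csSup hbdd hx
  have hIio_Iic : m (Iio u) = m (Iic u) := measure_congr Iio_ae_eq_Iic
  apply le_antisymm
  · calc m S ≤ m (Iic u) := measure_mono hIic
      _ = m (Iio u) := hIio_Iic.symm
      _ ≤ Y := measure_Iio_le_of_forall_lt fun x hx => hIio hx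
  · calc Y ≤ m (Iic u) := le_measure_Iic_of_forall_gt hfin fun x hx =>
          le_of_lt (not_le.1 fun hxS => (not_le.2 hx) (le_csSup hbdd hxS))
      _ = m (Iio u) := hIio_Iic.symm
      _ ≤ m S := measure_mono hIio

noncomputable def distribFun (m : Measure ℝ) (x : ℝ) : ℝ := (m (Iic x)).toReal

lemma monotone_distribFun (hfin : ∀ x, m (Iic x) ≠ ∞) : Monotone (distribFun m) :=
  fun _ _ hxy => ENNReal.toReal_mono (hfin _) (measure_mono (Iic_subset_Iic.2 hxy))

lemma measure_distribFun_preimage_Iic [NullSingletonClass m] (hfin : ∀ x, m (Iic x) ≠ ∞)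
    (htop : m univ = ∞) (y : ℝ) : m (distribFun m ⁻¹' Iic y) = ENNReal.ofReal y := by
  rcases lt_or_ge y 0 with hy | hy
  · rw [ENNReal.ofReal_of_nonpos hy.le, ← measure_empty (μ := m)]
    congr
    exact eq_empty_of_forall_notMem fun x hx => (hy.trans_le ENNReal.toReal_nonneg).not_ge hx
  · have : distribFun m ⁻¹' Iic y = {x | m (Iic x) ≤ ENNReal.ofReal y} := by
      ext x
      exact (ENNReal.le_ofReal_iff_toReal_le (hfin x) hy).symm
    rw [this, measure_setOf_measure_Iic_le hfin htop ENNReal.ofReal_ne_top]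

lemma map_distribFun [NullSingletonClass m] (hfin : ∀ x, m (Iic x) ≠ ∞)
    (htop : m univ = ∞) : m.map (distribFun m) = volume.restrict (Ici 0) := by
  have hmeas := (monotone_distribFun hfin).measurable
  refine Measure.ext_of_Iic_of_ne_top (fun y => ?_) fun y => ?_ <;>
    rw [Measure.map_apply hmeas measurableSet_Iic, measure_distribFun_preimage_Iic hfin htop]
  · exact ENNReal.ofReal_ne_top
  · rw [Measure.restrict_apply measurableSet_Iic, Iic_inter_Ici, Real.volume_Icc, sub_zero]

lemma Monotone.injOn_compl_preimage_range_rat {f : ℝ → ℝ} (hf : Monotone f) :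
    InjOn f (f ⁻¹' range (f ∘ ((↑) : ℚ → ℝ)))ᶜ := by
  -- If `f x = f y` with `x < y`, then `f` takes the same value at a rational between them.
  intro x hx y hy hxy
  by_contra hne
  rcases lt_or_gt_of_ne hne with h | h
  · obtain ⟨q, hxq, hqy⟩ := exists_rat_btwn h
    exact hx ⟨q, le_antisymm (hxy ▸ hf hqy.le) (hf hxq.le)⟩
  · obtain ⟨q, hyq, hqx⟩ := exists_rat_btwn h
    exact hy ⟨q, le_antisymm (hxy ▸ hf hqx.le) (hf hyq.le)⟩

lemma exists_null_injOn_distribFun [NullSingletonClass m]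
    (hfin : ∀ x, m (Iic x) ≠ ∞) (htop : m univ = ∞) :
    ∃ N, m N = 0 ∧ InjOn (distribFun m) Nᶜ := by
  have hmono := monotone_distribFun hfin
  refine ⟨_, ?_, hmono.injOn_compl_preimage_range_rat⟩
  have hcount : (range (distribFun m ∘ ((↑) : ℚ → ℝ))).Countable := countable_range _
  rw [← Measure.map_apply hmono.measurable hcount.measurableSet, map_distribFun hfin htop]
  exact hcount.measure_zero _

end DistribFun

section StandardBorel

variable {X Y : Type*} [MeasurableSpace X] [StandardBorelSpace X] [MeasurableSpace Y]

lemma exists_measurable_injective_measure_preimage_Iic_ne_top (m : Measure X) [SigmaFinite m] :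
    ∃ φ : X → ℝ, Measurable φ ∧ Injective φ ∧ ∀ y, m (φ ⁻¹' Iic y) ≠ ∞ := by
  -- `φ x ∈ [n x, n x + 1)`, so `φ ⁻¹' Iic y ⊆ spanningSets m ⌊y⌋₊`.
  set n := spanningSetsIndex m
  set s := Real.sigmoid ∘ embeddingReal X
  have hs_mem : ∀ x, s x ∈ Ico (0 : ℝ) 1 := fun x =>
    ⟨(Real.sigmoid_pos _).le, Real.sigmoid_lt_one _⟩
  have hfloor : ∀ x, ⌊(n x : ℝ) + s x⌋₊ = n x := fun x =>
    (Nat.floor_eq_iff (by linarith [(hs_mem x).1])).2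
      ⟨by linarith [(hs_mem x).1], by linarith [(hs_mem x).2]⟩
  refine ⟨fun x => n x + s x, ?_, fun x x' hxx' => ?_, fun y => ?_⟩
  · exact (measurable_from_nat.comp (measurableSet_spanningSetsIndex m)).add
      (continuous_sigmoid.measurable.comp (measurable_embeddingReal X))
  · simp only at hxx'
    have hn : n x = n x' := by rw [← hfloor x, ← hfloor x', hxx']
    simp only [hn, add_right_inj] at hxx'
    exact (measurableEmbedding_embeddingReal X).injective (Real.sigmoid_injective hxx')
  · refine ne_top_of_le_ne_top (measure_spanningSets_lt_top m ⌊y⌋₊).ne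
      (measure_mono fun x hx => ?_)
    refine mem_spanningSets_of_index_le m x (Nat.le_floor ?_)
    linarith [(hs_mem x).1, show (n x : ℝ) + s x ≤ y from hx]

lemma exists_measurable_leftInvOn [MeasurableSpace.CountablySeparated Y] [Nonempty X]
    {h : X → Y} (hh : Measurable h) {S : Set X} (hS : MeasurableSet S) (hinj : InjOn h S) :
    ∃ k : Y → X, Measurable k ∧ LeftInvOn k h S := by
  have : StandardBorelSpace S := hS.standardBorel
  have hemb : MeasurableEmbedding (S.domRestrict h) :=
    (hh.comp measurable_subtype_coe).measurableEmbedding (injOn_iff_injective.1 hinj)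
  obtain ⟨k, hk, hkh⟩ :=
    hemb.exists_measurable_extend measurable_subtype_coe fun _ => inferInstance
  exact ⟨k, hk, fun x hx => congrFun hkh ⟨x, hx⟩⟩

lemma exists_injOn_map_eq_volume_Ici (m : Measure X) [SigmaFinite m] [NullSingletonClass m]
    (htop : m univ = ∞) :
    ∃ g : X → ℝ, Measurable g ∧ m.map g = volume.restrict (Ici 0) ∧
      ∃ N, m N = 0 ∧ InjOn g Nᶜ := by
  obtain ⟨φ, hφ, hφinj, hφfin⟩ := exists_measurable_injective_measure_preimage_Iic_ne_top m
  set m' := m.map φ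
  have : NullSingletonClass m' := ⟨fun y => by
    rw [Measure.map_apply hφ (measurableSet_singleton y)]
    exact ((subsingleton_singleton.preimage hφinj).countable).measure_zero m⟩
  have hfin : ∀ y, m' (Iic y) ≠ ∞ := fun y => by
    rw [Measure.map_apply hφ measurableSet_Iic]; exact hφfin y
  have htop' : m' univ = ∞ := by rwa [Measure.map_apply hφ MeasurableSet.univ, preimage_univ]
  have hc := (monotone_distribFun hfin).measurable
  obtain ⟨N, hN, hinj⟩ := exists_null_injOn_distribFun hfin htop'
  refine ⟨distribFun m' ∘ φ, hc.comp hφ, ?_, φ ⁻¹' N, ?_,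
    hinj.comp hφinj.injOn fun _ hx => hx⟩
  · rw [← Measure.map_map hc hφ, map_distribFun hfin htop']
  · exact nonpos_iff_eq_zero.1 (hN ▸ Measure.le_map_apply hφ.aemeasurable N)

lemma exists_injOn_map_eq [StandardBorelSpace Y] (μ : Measure X) (ν : Measure Y) [SigmaFinite μ]
    [NullSingletonClass μ] [SigmaFinite ν] [NullSingletonClass ν] (hμ : μ univ = ∞)
    (hν : ν univ = ∞) :
    ∃ G : X → Y, Measurable G ∧ μ.map G = ν ∧ ∃ N, μ N = 0 ∧ InjOn G Nᶜ := by
  obtain ⟨g, hg, hgmap, Ng, hNg, hginj⟩ := exists_injOn_map_eq_volume_Ici μ hμ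
  obtain ⟨h, hh, hhmap, Nh, hNh, hhinj⟩ := exists_injOn_map_eq_volume_Ici ν hν
  set S := (toMeasurable ν Nh)ᶜ
  have hSm : MeasurableSet S := (measurableSet_toMeasurable ν Nh).compl
  have hSc : ν Sᶜ = 0 := by rw [compl_compl, measure_toMeasurable, hNh]
  have hSinj : InjOn h S := hhinj.mono (compl_subset_compl.2 (subset_toMeasurable _ _))
  have : Nonempty Y := ⟨(nonempty_of_measure_ne_zero (hν.trans_ne ENNReal.top_ne_zero)).some⟩
  obtain ⟨k, hk, hkh⟩ := exists_measurable_leftInvOn hh hSm hSinj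
  have hkh_ae : k ∘ h =ᵐ[ν] id :=
    ae_iff.2 (measure_mono_null (fun y hy hyS => hy (hkh hyS)) hSc)
  have himage : MeasurableSet (h '' S) := hSm.image_of_measurable_injOn hh hSinj
  refine ⟨k ∘ g, hk.comp hg, ?_, Ng ∪ g ⁻¹' (h '' S)ᶜ, measure_union_null hNg ?_, ?_⟩
  · rw [← Measure.map_map hk hg, hgmap, ← hhmap, Measure.map_map hk hh,
      Measure.map_congr hkh_ae, Measure.map_id]
  · refine nonpos_iff_eq_zero.1 ((Measure.le_map_apply hg.aemeasurable _).trans ?_)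
    rw [hgmap, ← hhmap, Measure.map_apply hh himage.compl, preimage_compl]
    exact (measure_mono (compl_subset_compl.2 (subset_preimage_image h S))).trans hSc.le
  · intro x hx x' hx' hxx'
    simp only [compl_union, mem_inter_iff, mem_compl_iff, mem_preimage, not_not] at hx hx'
    refine hginj hx.1 hx'.1 ?_
    rw [← hkh.rightInvOn_image hx.2, ← hkh.rightInvOn_image hx'.2]
    exact congrArg h hxx'

end StandardBorel

lemma exists_injective_map_eq_of_injOn {X Y : Type*} [MeasurableSpace X] [MeasurableSpace Y]
    {μ : Measure X} {ν : Measure Y} {G : X → Y} (hG : Measurable G) (hmap : μ.map G = ν)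
    {N : Set X} (hN : μ N = 0) (hinj : InjOn G Nᶜ) {Q M : Set Y} (hQ : ν Qᶜ = 0)
    (hMQ : M ⊆ Q) (hM : ν M = 0) {ψ : X → Y} (hψ : Measurable ψ) (hψinj : Injective ψ)
    (hψM : ∀ x, ψ x ∈ M) :
    ∃ F : X → Y, Measurable F ∧ Injective F ∧ (∀ x, F x ∈ Q) ∧ μ.map F = ν := by
  classical
  -- Off the null set `B`, `F = G` is injective and avoids `M`; on `B`, `F = ψ` lands in `M`.
  set B := toMeasurable μ (N ∪ G ⁻¹' (Qᶜ ∪ M))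
  have hB : μ B = 0 := by
    rw [measure_toMeasurable]
    refine measure_union_null hN (nonpos_iff_eq_zero.1 ?_)
    exact (Measure.le_map_apply hG.aemeasurable _).trans (hmap ▸ (measure_union_null hQ hM).le)
  have hgood : ∀ x ∉ B, x ∉ N ∧ G x ∈ Q ∧ G x ∉ M := fun x hx => by
    have := not_imp_not.2 (subset_toMeasurable μ (N ∪ G ⁻¹' (Qᶜ ∪ M)) ·) hx
    simp only [mem_union, mem_preimage, mem_compl_iff, not_or, not_not] at this
    exact ⟨this.1, this.2.1, this.2.2⟩
  refine ⟨B.piecewise ψ G, (hψ.piecewise (measurableSet_toMeasurable _ _) hG), ?_, ?_, ?_⟩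
  · intro x x' hxx'
    by_cases hx : x ∈ B <;> by_cases hx' : x' ∈ B <;>
      simp only [piecewise_eq_of_mem, piecewise_eq_of_notMem, hx, hx', not_false_eq_true] at hxx'
    · exact hψinj hxx'
    · exact ((hgood x' hx').2.2 (hxx' ▸ hψM x)).elim
    · exact ((hgood x hx).2.2 (hxx' ▸ hψM x')).elim
    · exact hinj (hgood x hx).1 (hgood x' hx').1 hxx'
  · intro x
    by_cases hx : x ∈ B
    · rw [piecewise_eq_of_mem _ _ _ hx]; exact hMQ (hψM x)
    · rw [piecewise_eq_of_notMem _ _ _ hx]; exact (hgood x hx).2.1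
  · rw [← hmap]
    exact Measure.map_congr ((measure_eq_zero_iff_ae_notMem.1 hB).mono fun x hx =>
      piecewise_eq_of_notMem _ _ _ hx)

lemma exists_mem_measure_singleton_prod_eq_zero {α β : Type*} [MeasurableSpace α]
    [MeasurableSingletonClass α] [MeasurableSpace β] (μ : Measure (α × β)) [SFinite μ]
    {s : Set α} (hs : ¬ s.Countable) {t : Set β} (ht : MeasurableSet t) :
    ∃ x ∈ s, μ ({x} ×ˢ t) = 0 := by
  by_contra! h
  refine hs ((Measure.countable_meas_pos_of_disjoint_iUnion₀ (As := fun x => {x} ×ˢ t)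
    (fun x => ((measurableSet_singleton x).prod ht).nullMeasurableSet) fun x y hxy => ?_).mono
    fun x hx => pos_iff_ne_zero.2 (h x hx))
  exact (Set.disjoint_prod.2 (Or.inl (disjoint_singleton.2 hxy))).aedisjoint

theorem stmt15_general (μ ν : Measure (ℝ × ℝ)) [SigmaFinite μ] [SigmaFinite ν]
    [NullSingletonClass μ] [NullSingletonClass ν]
    (hμsupp : μ ((Set.Ioi (0 : ℝ) ×ˢ Set.Ioi (0 : ℝ))ᶜ) = 0)
    (haxes : ∀ ε : ℝ, 0 < ε →
      μ (Set.Ioo 0 ε ×ˢ Set.Ioi (0 : ℝ)) = ⊤ ∧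
      μ (Set.Ioi (0 : ℝ) ×ˢ Set.Ioo 0 ε) = ⊤ ∧
      ν (Set.Ioo 0 ε ×ˢ Set.Ioi (0 : ℝ)) = ⊤ ∧
      ν (Set.Ioi (0 : ℝ) ×ˢ Set.Ioo 0 ε) = ⊤) :
    ∃ F : ℝ × ℝ → ℝ × ℝ, Measurable F ∧
      Set.InjOn F (Set.Ioi (0 : ℝ) ×ˢ Set.Ioi (0 : ℝ)) ∧
      (∀ u ∈ Set.Ioi (0 : ℝ) ×ˢ Set.Ioi (0 : ℝ),
        F u ∈ Set.Ioi (0 : ℝ) ×ˢ Set.Ioi (0 : ℝ)) ∧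
      ∀ B : Set (ℝ × ℝ), MeasurableSet B → ν (F ⁻¹' B) = μ B := by
  have hμ : μ univ = ∞ := top_unique ((haxes 1 one_pos).1 ▸ measure_mono (subset_univ _))
  have hν : ν univ = ∞ := top_unique ((haxes 1 one_pos).2.2.1 ▸ measure_mono (subset_univ _))
  obtain ⟨G, hG, hGmap, N, hN, hGinj⟩ := exists_injOn_map_eq ν μ hν hμ
  have hIoi : ¬ (Ioi (0 : ℝ)).Countable := fun h => by simpa using h.measure_zero volume
  obtain ⟨x₀, hx₀, hM⟩ :=
    exists_mem_measure_singleton_prod_eq_zero μ hIoi (measurableSet_Ioi (a := (0 : ℝ)))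
  obtain ⟨F, hF, hFinj, hFQ, hFmap⟩ := exists_injective_map_eq_of_injOn hG hGmap hN hGinj
    hμsupp (prod_mono (singleton_subset_iff.2 hx₀) le_rfl) hM
    (ψ := fun p => (x₀, Real.exp (embeddingReal (ℝ × ℝ) p))) (by fun_prop)
    (fun p p' h => (measurableEmbedding_embeddingReal _).injective
      (Real.exp_injective (Prod.ext_iff.1 h).2))
    (fun p => ⟨rfl, Real.exp_pos _⟩)
  refine ⟨F, hF, hFinj.injOn, fun u _ => hFQ u, fun B hB => ?_⟩
  rw [← Measure.map_apply hF hB, hFmap]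

/-- Abstract form of the rectangle-matching construction of Section 3: if `μ` and
`ν` are nonatomic σ-finite Borel measures on the open quadrant `(0,∞)²`, finite
and positive on half-open rectangles, with infinite mass near the coordinate axes,
and `c₁ ν(B) ≤ μ(B) ≤ c₂ ν(B)` for all Borel `B`, then there is an injective
measurable map `F` of the quadrant with `ν(F⁻¹(B)) = μ(B)` for all Borel `B`. -/
theorem stmt15 (μ ν : Measure (ℝ × ℝ)) [SigmaFinite μ] [SigmaFinite ν]
    [NullSingletonClass μ] [NullSingletonClass ν]
    (hμsupp : μ ((Set.Ioi (0 : ℝ) ×ˢ Set.Ioi (0 : ℝ))ᶜ) = 0)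
    (hνsupp : ν ((Set.Ioi (0 : ℝ) ×ˢ Set.Ioi (0 : ℝ))ᶜ) = 0)
    (hrect : ∀ a b c e : ℝ, 0 < a → a < b → 0 < c → c < e →
      (0 < μ (Set.Ico a b ×ˢ Set.Ico c e) ∧ μ (Set.Ico a b ×ˢ Set.Ico c e) < ⊤) ∧
      (0 < ν (Set.Ico a b ×ˢ Set.Ico c e) ∧ ν (Set.Ico a b ×ˢ Set.Ico c e) < ⊤))
    (haxes : ∀ ε : ℝ, 0 < ε →
      μ (Set.Ioo 0 ε ×ˢ Set.Ioi (0 : ℝ)) = ⊤ ∧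
      μ (Set.Ioi (0 : ℝ) ×ˢ Set.Ioo 0 ε) = ⊤ ∧
      ν (Set.Ioo 0 ε ×ˢ Set.Ioi (0 : ℝ)) = ⊤ ∧
      ν (Set.Ioi (0 : ℝ) ×ˢ Set.Ioo 0 ε) = ⊤)
    (c₁ c₂ : ℝ) (hc₁ : 0 < c₁) (hc₁₂ : c₁ ≤ c₂)
    (hcomp : ∀ B : Set (ℝ × ℝ), MeasurableSet B →
      ENNReal.ofReal c₁ * ν B ≤ μ B ∧ μ B ≤ ENNReal.ofReal c₂ * ν B) :
    ∃ F : ℝ × ℝ → ℝ × ℝ, Measurable F ∧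
      Set.InjOn F (Set.Ioi (0 : ℝ) ×ˢ Set.Ioi (0 : ℝ)) ∧
      (∀ u ∈ Set.Ioi (0 : ℝ) ×ˢ Set.Ioi (0 : ℝ),
        F u ∈ Set.Ioi (0 : ℝ) ×ˢ Set.Ioi (0 : ℝ)) ∧
      ∀ B : Set (ℝ × ℝ), MeasurableSet B → ν (F ⁻¹' B) = μ B :=
  stmt15_general μ ν hμsupp haxes
end
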